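/- arXiv:1306.3776 — 2 statements merged into one kernel-verified Lean document; each statement's English description precedes it below -/
import Mathlib

section
/- Let ψ be a diagonal state on M₂ with parameter 0 ≤ λ < 1/2 (ζ = 0). Define ρ = ((1−2λ)/(1−λ)) · diag(1, λ/(1−λ), (λ/(1−λ))², …), a positive trace-class diagonal operator with trace 1. Then ρ satisfies λ s*a s ρ s* a s + λ b s ρ s* b + (1−λ) s* b ρ b s + (1−λ) a ρ a = ρ, where a, b are diagonal with a²+b²=1, α₀=1; hence φ = Tr(ρ ·) is an invariant normal state for T_ψ. -/
/-! Every term of the equation is diagonal in the basis `e n`: conjugating a diagonal operator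
`diag d` by the shift gives `s* (diag d) s = diag (d (n + 1))` and
`s (diag d) s* = diag (0, d 0, d 1, …)`. Comparing diagonal entries, the equation becomes a
scalar identity which follows from `α n ^ 2 + β n ^ 2 = 1`, `α 0 = 1`, `β 0 = 0` and the
detailed balance `(1 - λ) w (n + 1) = λ w n` of the geometric weights `w` of `ρ`. -/

noncomputable section
open ContinuousLinearMap

abbrev H : Type := lp (fun _ : ℕ => ℂ) 2

def e (n : ℕ) : H := lp.single 2 n 1

lemma inner_e_left (n : ℕ) (x : H) : inner ℂ (e n) x = x n := by
  simp [e, lp.inner_single_left]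

lemma ext_e {T S : H →L[ℂ] H} (h : ∀ n, T (e n) = S (e n)) : T = S :=
  lp.ext_continuousLinearMap (by norm_num) fun n => ContinuousLinearMap.ext_ring (h n)

lemma adjoint_apply_of_shift {s : H →L[ℂ] H} (hs : ∀ n, s (e n) = e (n + 1))
    (x : H) (n : ℕ) :
    adjoint s x n = x (n + 1) := by
  rw [← inner_e_left, adjoint_inner_right, hs, inner_e_left]

lemma adjoint_shift_e_zero {s : H →L[ℂ] H} (hs : ∀ n, s (e n) = e (n + 1)) :
    adjoint s (e 0) = 0 := by
  ext n
  simp [adjoint_apply_of_shift hs, e, lp.single_apply]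

lemma adjoint_shift_e_succ {s : H →L[ℂ] H} (hs : ∀ n, s (e n) = e (n + 1)) (m : ℕ) :
    adjoint s (e (m + 1)) = e m := by
  ext n
  simp [adjoint_apply_of_shift hs, e, lp.single_apply, Pi.single_apply]

def IsDiagonal (T : H →L[ℂ] H) (d : ℕ → ℂ) : Prop := ∀ n, T (e n) = d n • e n

namespace IsDiagonal

variable {T S : H →L[ℂ] H} {d d' : ℕ → ℂ}

lemma comp (hT : IsDiagonal T d) (hS : IsDiagonal S d') : IsDiagonal (T ∘L S) (d * d') := by
  intro n
  rw [comp_apply, hS, map_smul, hT, smul_smul, Pi.mul_apply, mul_comm]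

lemma add (hT : IsDiagonal T d) (hS : IsDiagonal S d') : IsDiagonal (T + S) (d + d') := by
  intro n
  rw [add_apply, hT, hS, Pi.add_apply, add_smul]

lemma smul (c : ℂ) (hT : IsDiagonal T d) : IsDiagonal (c • T) (c • d) := by
  intro n
  rw [smul_apply, hT, smul_smul, Pi.smul_apply, smul_eq_mul]

lemma ext (hT : IsDiagonal T d) (hS : IsDiagonal S d') (h : d = d') : T = S :=
  ext_e fun n => by rw [hT, hS, h]

end IsDiagonal

def shiftSeq {R : Type*} [Zero R] (d : ℕ → R) : ℕ → R
  | 0 => 0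
  | n + 1 => d n

section Shift

variable {s D : H →L[ℂ] H} {d : ℕ → ℂ}

lemma IsDiagonal.adjoint_shift_comp_comp_shift (hs : ∀ n, s (e n) = e (n + 1))
    (hD : IsDiagonal D d) : IsDiagonal (adjoint s ∘L D ∘L s) (fun n => d (n + 1)) := by
  intro n
  rw [comp_apply, comp_apply, hs, hD, map_smul, adjoint_shift_e_succ hs]

lemma IsDiagonal.shift_comp_comp_adjoint_shift (hs : ∀ n, s (e n) = e (n + 1))
    (hD : IsDiagonal D d) : IsDiagonal (s ∘L D ∘L adjoint s) (shiftSeq d) := by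
  rintro (_ | n)
  · rw [comp_apply, comp_apply, adjoint_shift_e_zero hs, map_zero, map_zero, shiftSeq, zero_smul]
  · rw [comp_apply, comp_apply, adjoint_shift_e_succ hs, hD, map_smul, hs, shiftSeq]

end Shift

lemma diagonal_balance_of_detailed_balance {R : Type*} [CommRing R] (α β w : ℕ → R) (l : R)
    (hα0 : α 0 = 1) (hβ0 : β 0 = 0) (hαβ : ∀ n, α n ^ 2 + β n ^ 2 = 1)
    (hw : ∀ n, (1 - l) * w (n + 1) = l * w n) (n : ℕ) :
    l * (α (n + 1) * w n * α (n + 1)) + l * (β n * shiftSeq w n * β n)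
      + (1 - l) * (β (n + 1) * w (n + 1) * β (n + 1)) + (1 - l) * (α n * w n * α n) = w n := by
  rcases n with _ | n
  · rw [shiftSeq, hβ0]
    linear_combination (l * w 0) * hαβ 1 + β 1 ^ 2 * hw 0 + ((1 - l) * w 0 * (α 0 + 1)) * hα0
  · rw [shiftSeq]
    linear_combination (l * w (n + 1)) * hαβ (n + 2) + ((1 - l) * w (n + 1)) * hαβ (n + 1)
      - β (n + 1) ^ 2 * hw n + β (n + 2) ^ 2 * hw (n + 1)

def invariantWeight (l : ℝ) (n : ℕ) : ℝ := (1 - 2 * l) / (1 - l) * (l / (1 - l)) ^ n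

lemma one_sub_mul_invariantWeight_succ {l : ℝ} (hl : 1 - l ≠ 0) (n : ℕ) :
    (1 - l) * invariantWeight l (n + 1) = l * invariantWeight l n := by
  rw [invariantWeight, invariantWeight, pow_succ]
  field_simp

theorem diagonal_invariant_state_general (α β : ℕ → ℝ) (hα0 : α 0 = 1) (hβ0 : β 0 = 0)
    (hαβ : ∀ n, α n ^ 2 + β n ^ 2 = 1)
    (s a b : H →L[ℂ] H)
    (hs : ∀ n, s (e n) = e (n + 1))
    (ha : ∀ n, a (e n) = (α n : ℂ) • e n)
    (hb : ∀ n, b (e n) = (β n : ℂ) • e n)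
    (l : ℝ) (hl1 : l < 1 / 2)
    (ρ : H →L[ℂ] H)
    (hρ : ∀ n, ρ (e n) = (((1 - 2 * l) / (1 - l) * (l / (1 - l)) ^ n : ℝ) : ℂ) • e n) :
    (l : ℂ) • ((adjoint s ∘L a ∘L s) ∘L ρ ∘L (adjoint s ∘L a ∘L s))
      + (l : ℂ) • ((b ∘L s) ∘L ρ ∘L (adjoint s ∘L b))
      + ((1 - l : ℝ) : ℂ) • ((adjoint s ∘L b) ∘L ρ ∘L (b ∘L s))
      + ((1 - l : ℝ) : ℂ) • (a ∘L ρ ∘L a) = ρ := by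
  have ha : IsDiagonal a _ := ha
  have hb : IsDiagonal b _ := hb
  have hρ : IsDiagonal ρ (fun n => (invariantWeight l n : ℂ)) := hρ
  have hsas := ha.adjoint_shift_comp_comp_shift hs
  have hLHS := (((((hsas.comp hρ).comp hsas).smul (l : ℂ)).add
      (((hb.comp (hρ.shift_comp_comp_adjoint_shift hs)).comp hb).smul (l : ℂ))).add
      ((((hb.comp hρ).comp hb).adjoint_shift_comp_comp_shift hs).smul ((1 - l : ℝ) : ℂ))).add
      (((ha.comp hρ).comp ha).smul ((1 - l : ℝ) : ℂ))
  simp only [comp_assoc] at hLHS ⊢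
  refine hLHS.ext hρ (funext fun n => ?_)
  have hl : 1 - l ≠ 0 := by linarith
  simp only [Pi.add_apply, Pi.smul_apply, Pi.mul_apply, smul_eq_mul, Complex.ofReal_sub,
    Complex.ofReal_one]
  -- elaborated without the expected type: unifying with the goal first is very slow
  exact (diagonal_balance_of_detailed_balance (fun n => (α n : ℂ)) (fun n => (β n : ℂ))
    (fun n => (invariantWeight l n : ℂ)) l (by simp [hα0])
    (by simp [hβ0]) (fun n => by exact_mod_cast hαβ n)
    (fun n => by exact_mod_cast one_sub_mul_invariantWeight_succ hl n) n :)

/-- for a diagonal state ψ with 0 ≤ λ < 1/2, the diagonal operator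
ρ = ((1−2λ)/(1−λ)) diag(1, λ/(1−λ), (λ/(1−λ))², …) satisfies the fixed point equation
λ s*as ρ s*as + λ bs ρ s*b + (1−λ) s*b ρ bs + (1−λ) a ρ a = ρ, i.e. Tr(ρ ·) is an
invariant normal state for T_ψ. -/
theorem diagonal_invariant_state (α β : ℕ → ℝ) (hα0 : α 0 = 1) (hβ0 : β 0 = 0)
    (hαβ : ∀ n, α n ^ 2 + β n ^ 2 = 1) (hβ : ∀ n, 1 ≤ n → β n ≠ 0)
    (s a b : H →L[ℂ] H)
    (hs : ∀ n, s (e n) = e (n + 1))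
    (ha : ∀ n, a (e n) = (α n : ℂ) • e n)
    (hb : ∀ n, b (e n) = (β n : ℂ) • e n)
    (l : ℝ) (hl0 : 0 ≤ l) (hl1 : l < 1 / 2)
    (ρ : H →L[ℂ] H)
    (hρ : ∀ n, ρ (e n) = (((1 - 2 * l) / (1 - l) * (l / (1 - l)) ^ n : ℝ) : ℂ) • e n) :
    (l : ℂ) • ((adjoint s ∘L a ∘L s) ∘L ρ ∘L (adjoint s ∘L a ∘L s))
      + (l : ℂ) • ((b ∘L s) ∘L ρ ∘L (adjoint s ∘L b))
      + ((1 - l : ℝ) : ℂ) • ((adjoint s ∘L b) ∘L ρ ∘L (b ∘L s))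
      + ((1 - l : ℝ) : ℂ) • (a ∘L ρ ∘L a) = ρ :=
  diagonal_invariant_state_general α β hα0 hβ0 hαβ s a b hs ha hb l hl1 ρ hρ
end
end

section
/- For ψ = ψ₋ (the state with λ = 0), the transition operator T_{ψ₋}(x) = bs x s*b + a x a is weakly mixing for any admissible model parameters: if x ∈ B(ℓ²(ℕ)) and T_{ψ₋}(x) = μ x with |μ| = 1, then μ = 1 and x is a scalar multiple of the identity. -/
/-!
In the basis `e n` the equation `T_{ψ₋} x = μ x` becomes the recursion
`(μ - α m α n) x_{m,n} = β m β n x_{m-1,n-1}`, where the right side is `0` on the boundary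
`m = 0 ∨ n = 0` because `β 0 = 0`. As `|α n| < 1` for `n ≥ 1` and `|μ| = 1`, the factor
`μ - α m α n` vanishes only at `(0, 0)`. Hence all off-diagonal entries vanish, and the diagonal
is determined by `x_{0,0}`, which must be nonzero since `x ≠ 0`. The `(0, 0)` equation then gives
`μ = α 0 ^ 2 = 1`, and for `μ = 1` the recursion reads `β n ^ 2 x_{n,n} = β n ^ 2 x_{n-1,n-1}`.
-/

noncomputable section
open ContinuousLinearMap
open scoped InnerProductSpace

lemma inner_e_left_s12 (m : ℕ) (v : H) : ⟪e m, v⟫_ℂ = v m := by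
  simp [e, lp.inner_single_left]

lemma inner_e_e (k m : ℕ) : ⟪e k, e m⟫_ℂ = if k = m then 1 else 0 := by
  rw [inner_e_left_s12, e, lp.single_apply]
  simp [Pi.single_apply]

lemma ext_inner_e {v w : H} (h : ∀ m, ⟪e m, v⟫_ℂ = ⟪e m, w⟫_ℂ) : v = w :=
  lp.ext <| funext fun m => by simpa only [inner_e_left_s12] using h m

lemma ContinuousLinearMap.ext_inner_e_e {x y : H →L[ℂ] H}
    (h : ∀ m n, ⟪e m, x (e n)⟫_ℂ = ⟪e m, y (e n)⟫_ℂ) : x = y :=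
  lp.ext_continuousLinearMap ENNReal.ofNat_ne_top fun n =>
    ext_ring <| ext_inner_e fun m => h m n

lemma adjoint_apply_e_of_diagonal {t : H →L[ℂ] H} {c : ℕ → ℝ}
    (ht : ∀ n, t (e n) = (c n : ℂ) • e n) (m : ℕ) : adjoint t (e m) = (c m : ℂ) • e m :=
  ext_inner_e fun k => by
    rw [adjoint_inner_right, ht, inner_smul_left, inner_smul_right, Complex.conj_ofReal,
      inner_e_e]
    split_ifs with hkm
    · rw [hkm]
    · simp

lemma inner_e_apply_of_diagonal {t : H →L[ℂ] H} {c : ℕ → ℝ}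
    (ht : ∀ n, t (e n) = (c n : ℂ) • e n) (m : ℕ) (w : H) :
    ⟪e m, t w⟫_ℂ = c m * ⟪e m, w⟫_ℂ := by
  rw [← adjoint_inner_left, adjoint_apply_e_of_diagonal ht, inner_smul_left, Complex.conj_ofReal]

lemma adjoint_apply_e_succ_of_shift {s : H →L[ℂ] H} (hs : ∀ n, s (e n) = e (n + 1)) (n : ℕ) :
    adjoint s (e (n + 1)) = e n :=
  ext_inner_e fun k => by simp [adjoint_inner_right, hs, inner_e_e]

lemma inner_e_transition_apply_e {α β : ℕ → ℝ} {s a b : H →L[ℂ] H}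
    (ha : ∀ n, a (e n) = (α n : ℂ) • e n) (hb : ∀ n, b (e n) = (β n : ℂ) • e n)
    (x : H →L[ℂ] H) (m n : ℕ) :
    ⟪e m, ((b ∘L s) ∘L x ∘L (adjoint s ∘L b) + a ∘L x ∘L a) (e n)⟫_ℂ =
      β m * β n * ⟪adjoint s (e m), x (adjoint s (e n))⟫_ℂ + α m * α n * ⟪e m, x (e n)⟫_ℂ := by
  simp only [add_apply, comp_apply, inner_add_right, hb n, ha n, map_smul, inner_smul_right,
    inner_e_apply_of_diagonal hb, inner_e_apply_of_diagonal ha, ← adjoint_inner_left]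
  ring

/-- The coefficient equations of `T_{ψ₋} x = μ x` for the matrix `c m n = ⟪e m, x (e n)⟫`. -/
structure CoeffEqs (α β : ℕ → ℝ) (μ : ℂ) (c : ℕ → ℕ → ℂ) : Prop where
  succ : ∀ m n, (μ - α (m + 1) * α (n + 1)) * c (m + 1) (n + 1) = β (m + 1) * β (n + 1) * c m n
  boundary : ∀ m n, m = 0 ∨ n = 0 → (μ - α m * α n) * c m n = 0

lemma coeffEqs_of_transition_eq_smul {α β : ℕ → ℝ} (hβ0 : β 0 = 0) {s a b : H →L[ℂ] H}
    (hs : ∀ n, s (e n) = e (n + 1))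
    (ha : ∀ n, a (e n) = (α n : ℂ) • e n) (hb : ∀ n, b (e n) = (β n : ℂ) • e n)
    {μ : ℂ} {x : H →L[ℂ] H} (hx : (b ∘L s) ∘L x ∘L (adjoint s ∘L b) + a ∘L x ∘L a = μ • x) :
    CoeffEqs α β μ fun m n => ⟪e m, x (e n)⟫_ℂ := by
  have key : ∀ m n, (μ - α m * α n) * ⟪e m, x (e n)⟫_ℂ =
      β m * β n * ⟪adjoint s (e m), x (adjoint s (e n))⟫_ℂ := fun m n => by
    have h := congrArg (fun T : H →L[ℂ] H => ⟪e m, T (e n)⟫_ℂ) hx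
    simp only [inner_e_transition_apply_e ha hb, smul_apply, inner_smul_right] at h
    linear_combination -h
  refine ⟨fun m n => ?_, fun m n hmn => ?_⟩
  · simpa only [adjoint_apply_e_succ_of_shift hs] using key (m + 1) (n + 1)
  · rcases hmn with rfl | rfl <;> simp [key, hβ0]

lemma ne_mul_of_norm_eq_one {μ u v : ℂ} (hμ : ‖μ‖ = 1) (hu : ‖u‖ ≤ 1) (hv : ‖v‖ < 1) :
    μ ≠ u * v := by
  rintro rfl
  rw [norm_mul] at hμ
  nlinarith [norm_nonneg u, norm_nonneg v]

lemma abs_le_one_of_sq_add_sq_eq_one {a b : ℝ} (h : a ^ 2 + b ^ 2 = 1) : |a| ≤ 1 :=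
  (sq_le_one_iff_abs_le_one a).mp (by nlinarith [sq_nonneg b])

lemma abs_lt_one_of_sq_add_sq_eq_one {a b : ℝ} (h : a ^ 2 + b ^ 2 = 1) (hb : b ≠ 0) : |a| < 1 :=
  (sq_lt_one_iff_abs_lt_one a).mp (by nlinarith [pow_pos (abs_pos.mpr hb) 2, sq_abs b])

lemma sub_mul_ne_zero_of_ne_zero {α β : ℕ → ℝ} (hαβ : ∀ n, α n ^ 2 + β n ^ 2 = 1)
    (hβ : ∀ n, 1 ≤ n → β n ≠ 0) {μ : ℂ} (hμ : ‖μ‖ = 1) {m n : ℕ} (hmn : m ≠ 0 ∨ n ≠ 0) :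
    μ - α m * α n ≠ 0 := by
  have hle k : ‖(α k : ℂ)‖ ≤ 1 := by
    simpa only [Complex.norm_real, Real.norm_eq_abs] using abs_le_one_of_sq_add_sq_eq_one (hαβ k)
  have hlt k (hk : k ≠ 0) : ‖(α k : ℂ)‖ < 1 := by
    simpa only [Complex.norm_real, Real.norm_eq_abs] using
      abs_lt_one_of_sq_add_sq_eq_one (hαβ k) (hβ k (Nat.one_le_iff_ne_zero.mpr hk))
  rw [sub_ne_zero]
  rcases hmn with hm | hn
  · rw [mul_comm]
    exact ne_mul_of_norm_eq_one hμ (hle n) (hlt m hm)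
  · exact ne_mul_of_norm_eq_one hμ (hle m) (hlt n hn)

namespace CoeffEqs

variable {α β : ℕ → ℝ} {μ : ℂ} {c : ℕ → ℕ → ℂ}

lemma eq_zero_of_ne (h : CoeffEqs α β μ c)
    (hres : ∀ m n, m ≠ 0 ∨ n ≠ 0 → μ - α m * α n ≠ 0) {m n : ℕ} (hmn : m ≠ n) : c m n = 0 := by
  induction n generalizing m with
  | zero => exact (mul_eq_zero.mp (h.boundary m 0 (.inr rfl))).resolve_left (hres m 0 (.inl hmn))
  | succ n ih =>
    cases m with
    | zero =>
      exact (mul_eq_zero.mp (h.boundary 0 (n + 1) (.inl rfl))).resolve_left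
        (hres 0 (n + 1) (.inr n.succ_ne_zero))
    | succ m =>
      have hrec := h.succ m n
      rw [ih (by omega), mul_zero] at hrec
      exact (mul_eq_zero.mp hrec).resolve_left (hres _ _ (.inl m.succ_ne_zero))

lemma diag_eq_zero (h : CoeffEqs α β μ c)
    (hres : ∀ m n, m ≠ 0 ∨ n ≠ 0 → μ - α m * α n ≠ 0) (h0 : c 0 0 = 0) (k : ℕ) : c k k = 0 := by
  induction k with
  | zero => exact h0
  | succ k ih =>
    have hrec := h.succ k k
    rw [ih, mul_zero] at hrec
    exact (mul_eq_zero.mp hrec).resolve_left (hres _ _ (.inl k.succ_ne_zero))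

lemma eq_one (h : CoeffEqs α β μ c) (hα0 : α 0 = 1) (h0 : c 0 0 ≠ 0) : μ = 1 := by
  have h00 := h.boundary 0 0 (.inl rfl)
  rw [hα0, Complex.ofReal_one, mul_one] at h00
  exact sub_eq_zero.mp ((mul_eq_zero.mp h00).resolve_right h0)

lemma diag_eq_of_eq_one (h : CoeffEqs α β 1 c) (hαβ : ∀ n, α n ^ 2 + β n ^ 2 = 1)
    (hβ : ∀ n, 1 ≤ n → β n ≠ 0) (k : ℕ) : c k k = c 0 0 := by
  induction k with
  | zero => rfl
  | succ k ih =>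
    have hβsq : (1 : ℂ) - α (k + 1) * α (k + 1) = β (k + 1) * β (k + 1) := by
      have hsum : (α (k + 1) : ℂ) ^ 2 + (β (k + 1) : ℂ) ^ 2 = 1 := by exact_mod_cast hαβ (k + 1)
      linear_combination -hsum
    have hβne : (β (k + 1) : ℂ) * β (k + 1) ≠ 0 := by
      have := Complex.ofReal_ne_zero.mpr (hβ (k + 1) k.succ_pos)
      exact mul_ne_zero this this
    have hrec := h.succ k k
    rw [hβsq] at hrec
    rw [← ih]
    exact mul_left_cancel₀ hβne hrec

end CoeffEqs

/-- the transition operator T_{ψ₋}(x) = bs x s*b + a x a is weakly mixing: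
if T_{ψ₋}(x) = μ x with |μ| = 1 then μ = 1 and x is a scalar multiple of the identity. -/
theorem psi_minus_weakly_mixing (α β : ℕ → ℝ) (hα0 : α 0 = 1) (hβ0 : β 0 = 0)
    (hαβ : ∀ n, α n ^ 2 + β n ^ 2 = 1) (hβ : ∀ n, 1 ≤ n → β n ≠ 0)
    (s a b : H →L[ℂ] H)
    (hs : ∀ n, s (e n) = e (n + 1))
    (ha : ∀ n, a (e n) = (α n : ℂ) • e n)
    (hb : ∀ n, b (e n) = (β n : ℂ) • e n)
    (μ : ℂ) (hμ : ‖μ‖ = 1) (x : H →L[ℂ] H) (hx0 : x ≠ 0)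
    (hx : (b ∘L s) ∘L x ∘L (adjoint s ∘L b) + a ∘L x ∘L a = μ • x) :
    μ = 1 ∧ ∃ c : ℂ, x = c • 1 := by
  have hc := coeffEqs_of_transition_eq_smul hβ0 hs ha hb hx
  have hres m n : m ≠ 0 ∨ n ≠ 0 → μ - α m * α n ≠ 0 := sub_mul_ne_zero_of_ne_zero hαβ hβ hμ
  have hc00 : ⟪e 0, x (e 0)⟫_ℂ ≠ 0 := fun h0 => hx0 <| ext_inner_e_e fun m n => by
    rcases eq_or_ne m n with rfl | hmn
    · simpa using hc.diag_eq_zero hres h0 m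
    · simpa using hc.eq_zero_of_ne hres hmn
  obtain rfl : μ = 1 := hc.eq_one hα0 hc00
  refine ⟨rfl, ⟪e 0, x (e 0)⟫_ℂ, ext_inner_e_e fun m n => ?_⟩
  rw [smul_apply, one_apply_eq_self, inner_smul_right, inner_e_e]
  rcases eq_or_ne m n with rfl | hmn
  · simpa using hc.diag_eq_of_eq_one hαβ hβ m
  · simpa [hmn] using hc.eq_zero_of_ne hres hmn
end
end
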